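/- arXiv:2411.16600 — 5 statements merged into one kernel-verified Lean document; each statement's English description precedes it below -/
import Mathlib

section
/- Let n be a natural number, let w : Fin n → ℝ be item weights with w i ≥ 0 for all i, let ρ ≥ 1 be a real number, let X̂, X' be finite subsets of Fin n, and let Y be a finite subset of Fin n. Define the modified weights w̄ by w̄ i = w i if i ∈ X̂ and w̄ i = 0 otherwise. If Σ_{i∈Y} w̄ i ≤ ρ · Σ_{i∈(Fin n)\X'} w̄ i (i.e., Y is a ρ-approximate solution with respect to the modified weights, compared against the complement of X'), then the set X := (Fin n) \ Y satisfies Σ_{i∈X} w i ≥ Σ_{i∈X'} w i − (ρ − 1) · η⁺ − η⁻, where η⁺ = Σ_{i∈X̂\X'} w i and η⁻ = Σ_{i∈X'\X̂} w i. -/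
/-- Core guarantee of the black-box learning-augmented algorithm for
maximization selection problems (Theorem 3.1): zero out the weights of
non-predicted items, run a ρ-approximation algorithm for the complementary
minimization problem to obtain `Y`, and return the complement of `Y`. -/
theorem max_blackbox_guarantee (n : ℕ) (w : Fin n → ℝ) (hw : ∀ i, 0 ≤ w i)
    (ρ : ℝ) (hρ : 1 ≤ ρ) (Xhat X' Y : Finset (Fin n))
    (hY : ∑ i ∈ Y, (if i ∈ Xhat then w i else 0) ≤
      ρ * ∑ i ∈ Finset.univ \ X', (if i ∈ Xhat then w i else 0)) :
    ∑ i ∈ Finset.univ \ Y, w i ≥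
      (∑ i ∈ X', w i) - (ρ - 1) * (∑ i ∈ Xhat \ X', w i)
        - ∑ i ∈ X' \ Xhat, w i := by
  have h1 : ∑ i ∈ Finset.univ \ X', (if i ∈ Xhat then w i else 0)
      = ∑ i ∈ Xhat \ X', w i := by
    rw [← Finset.sum_filter]
    congr 1
    ext i
    simp [Finset.mem_filter]
    tauto
  have h2 : ∑ i ∈ Y, (if i ∈ Xhat then w i else 0)
      = ∑ i ∈ Y ∩ Xhat, w i := by
    rw [← Finset.sum_filter, Finset.filter_mem_eq_inter]
  have hsplitY : ∑ i ∈ Y ∩ Xhat, w i + ∑ i ∈ Y \ Xhat, w i = ∑ i ∈ Y, w i :=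
    Finset.sum_inter_add_sum_sdiff Y Xhat w
  have hcompY : ∑ i ∈ Finset.univ \ Y, w i
      = ∑ i ∈ Finset.univ, w i - ∑ i ∈ Y, w i :=
    Finset.sum_sdiff_eq_sub (Finset.subset_univ Y)
  have hcompXhat : ∑ i ∈ Finset.univ \ Xhat, w i
      = ∑ i ∈ Finset.univ, w i - ∑ i ∈ Xhat, w i :=
    Finset.sum_sdiff_eq_sub (Finset.subset_univ Xhat)
  have hYle : ∑ i ∈ Y \ Xhat, w i ≤ ∑ i ∈ Finset.univ \ Xhat, w i :=
    Finset.sum_le_sum_of_subset_of_nonneg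
      (Finset.sdiff_subset_sdiff (Finset.subset_univ Y) le_rfl)
      (fun i _ _ => hw i)
  have hXhat : ∑ i ∈ Xhat ∩ X', w i + ∑ i ∈ Xhat \ X', w i = ∑ i ∈ Xhat, w i :=
    Finset.sum_inter_add_sum_sdiff Xhat X' w
  have hX' : ∑ i ∈ X' ∩ Xhat, w i + ∑ i ∈ X' \ Xhat, w i = ∑ i ∈ X', w i :=
    Finset.sum_inter_add_sum_sdiff X' Xhat w
  have hinter : ∑ i ∈ X' ∩ Xhat, w i = ∑ i ∈ Xhat ∩ X', w i := by
    rw [Finset.inter_comm]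
  rw [h1, h2] at hY
  nlinarith [hY, hsplitY, hcompY, hcompXhat, hYle, hXhat, hX', hinter]
end

section
/- Let ι be a type and let A, B be finite subsets (Finsets) of ι. Let s : ι → ℝ be item sizes with s i > 0 for all i, and v : ι → ℝ be item worths with v i ≥ 0 for all i. Suppose that for every a ∈ A \ B and every b ∈ B \ A we have v a · s b ≤ v b · s a (the worth-to-size ratio of every element of A \ B is at most that of every element of B \ A), and suppose Σ_{i∈A\B} s i ≤ Σ_{i∈B\A} s i. Then Σ_{i∈A} v i ≤ Σ_{i∈B} v i. -/
/-- Key comparison step in the analysis of the greedy 2-approximation for the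
problem complementary to Knapsack: if every item of `A \ B` has worth-to-size
ratio at most that of every item of `B \ A`, and the total size of `A \ B` is
at most that of `B \ A`, then the total worth of `A` is at most that of `B`. -/
theorem worth_le_of_ratio_le {ι : Type*} [DecidableEq ι] (A B : Finset ι)
    (s v : ι → ℝ) (hs : ∀ i, 0 < s i) (hv : ∀ i, 0 ≤ v i)
    (hratio : ∀ a ∈ A \ B, ∀ b ∈ B \ A, v a * s b ≤ v b * s a)
    (hsize : ∑ i ∈ A \ B, s i ≤ ∑ i ∈ B \ A, s i) :
    ∑ i ∈ A, v i ≤ ∑ i ∈ B, v i := by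
  have key : ∑ i ∈ A \ B, v i ≤ ∑ i ∈ B \ A, v i := by
    rcases (A \ B).eq_empty_or_nonempty with h | h
    · rw [h, Finset.sum_empty]
      exact Finset.sum_nonneg fun i _ => hv i
    · have hBA : (B \ A).Nonempty := by
        by_contra hne
        rw [Finset.not_nonempty_iff_eq_empty] at hne
        rw [hne, Finset.sum_empty] at hsize
        have : 0 < ∑ i ∈ A \ B, s i :=
          Finset.sum_pos (fun i _ => hs i) h
        linarith
      obtain ⟨b0, hb0, hmin⟩ := (B \ A).exists_min_image (fun b => v b / s b) hBA
      calc ∑ i ∈ A \ B, v i ≤ ∑ i ∈ A \ B, (v b0 / s b0) * s i := by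
            apply Finset.sum_le_sum
            intro a ha
            have := hratio a ha b0 hb0
            rw [div_mul_eq_mul_div, le_div_iff₀ (hs b0)]
            linarith [this]
        _ = (v b0 / s b0) * ∑ i ∈ A \ B, s i := by rw [Finset.mul_sum]
        _ ≤ (v b0 / s b0) * ∑ i ∈ B \ A, s i := by
            apply mul_le_mul_of_nonneg_left hsize
            exact div_nonneg (hv b0) (hs b0).le
        _ = ∑ i ∈ B \ A, (v b0 / s b0) * s i := by rw [Finset.mul_sum]
        _ ≤ ∑ i ∈ B \ A, v i := by
            apply Finset.sum_le_sum
            intro b hb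
            have := hmin b hb
            rw [div_le_div_iff₀ (hs b0) (hs b)] at this
            rw [div_mul_eq_mul_div, div_le_iff₀ (hs b0)]
            linarith
  have hA := Finset.sum_inter_add_sum_sdiff A B v
  have hB := Finset.sum_inter_add_sum_sdiff B A v
  rw [Finset.inter_comm] at hB
  linarith
end

section
/- Let s : ℕ → ℝ be item sizes with s j > 0 for all j, and v : ℕ → ℝ be item worths with v j ≥ 0 for all j, sorted so that the worth-to-size ratios are nondecreasing: for all i ≤ j, v i · s j ≤ v j · s i. Let t be a real number, let B be a finite subset of ℕ with Σ_{j∈B} s j ≥ t (a feasible set for target t), and let A be a finite subset of ℕ with Σ_{j∈A} s j < t. Suppose there is an index i ∈ B \ A such that every element of A is strictly less than i, and every element of B that is strictly less than i belongs to A. Then Σ_{j∈A∪{i}} v j ≤ 2 · Σ_{j∈B} v j. -/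
/-- Core combinatorial claim behind the O(n log n)-time 2-approximation
algorithm for the complementary Knapsack problem (Algorithm 1): with items
sorted by nondecreasing worth-to-size ratio, the greedy prefix `A` together
with the pivot item `i ∈ B \ A` has total worth at most twice that of any
feasible set `B`. -/
theorem greedy_two_approx (s v : ℕ → ℝ) (hs : ∀ j, 0 < s j) (hv : ∀ j, 0 ≤ v j)
    (hsorted : ∀ i j : ℕ, i ≤ j → v i * s j ≤ v j * s i)
    (t : ℝ) (B : Finset ℕ) (hB : t ≤ ∑ j ∈ B, s j)
    (A : Finset ℕ) (hA : ∑ j ∈ A, s j < t)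
    (i : ℕ) (hi : i ∈ B \ A)
    (hAi : ∀ a ∈ A, a < i)
    (hBi : ∀ b ∈ B, b < i → b ∈ A) :
    ∑ j ∈ A ∪ {i}, v j ≤ 2 * ∑ j ∈ B, v j := by
  obtain ⟨hiB, hiA⟩ := Finset.mem_sdiff.mp hi
  set ρ : ℝ := v i / s i with hρ
  have hρ0 : 0 ≤ ρ := div_nonneg (hv i) (hs i).le
  -- elements of B \ A are ≥ i
  have hBA : ∀ b ∈ B \ A, i ≤ b := by
    intro b hb
    obtain ⟨hbB, hbA⟩ := Finset.mem_sdiff.mp hb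
    by_contra h
    exact hbA (hBi b hbB (by omega))
  -- per-element bounds
  have h1 : ∀ a ∈ A \ B, v a ≤ ρ * s a := by
    intro a ha
    have haA := (Finset.mem_sdiff.mp ha).1
    have h := hsorted a i (hAi a haA).le
    rw [hρ, div_mul_eq_mul_div, le_div_iff₀ (hs i)]
    linarith [h]
  have h2 : ∀ b ∈ B \ A, ρ * s b ≤ v b := by
    intro b hb
    have h := hsorted i b (hBA b hb)
    rw [hρ, div_mul_eq_mul_div, div_le_iff₀ (hs i)]
    linarith [h]
  -- size comparison
  have hsize : ∑ j ∈ A \ B, s j ≤ ∑ j ∈ B \ A, s j := by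
    have e1 : ∑ j ∈ A \ B, s j + ∑ j ∈ A ∩ B, s j = ∑ j ∈ A, s j := by
      rw [← Finset.sum_union (Finset.disjoint_sdiff_inter A B), Finset.sdiff_union_inter]
    have e2 : ∑ j ∈ B \ A, s j + ∑ j ∈ B ∩ A, s j = ∑ j ∈ B, s j := by
      rw [← Finset.sum_union (Finset.disjoint_sdiff_inter B A), Finset.sdiff_union_inter]
    have e3 : ∑ j ∈ A ∩ B, s j = ∑ j ∈ B ∩ A, s j := by rw [Finset.inter_comm]
    linarith
  -- worth comparison on symmetric differences
  have hworth : ∑ j ∈ A \ B, v j ≤ ∑ j ∈ B \ A, v j :=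
    calc ∑ j ∈ A \ B, v j ≤ ∑ j ∈ A \ B, ρ * s j := Finset.sum_le_sum h1
      _ = ρ * ∑ j ∈ A \ B, s j := by rw [Finset.mul_sum]
      _ ≤ ρ * ∑ j ∈ B \ A, s j := mul_le_mul_of_nonneg_left hsize hρ0
      _ = ∑ j ∈ B \ A, ρ * s j := by rw [Finset.mul_sum]
      _ ≤ ∑ j ∈ B \ A, v j := Finset.sum_le_sum h2
  have hAB : ∑ j ∈ A, v j ≤ ∑ j ∈ B, v j := by
    have e1 : ∑ j ∈ A \ B, v j + ∑ j ∈ A ∩ B, v j = ∑ j ∈ A, v j := by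
      rw [← Finset.sum_union (Finset.disjoint_sdiff_inter A B), Finset.sdiff_union_inter]
    have e2 : ∑ j ∈ B \ A, v j + ∑ j ∈ B ∩ A, v j = ∑ j ∈ B, v j := by
      rw [← Finset.sum_union (Finset.disjoint_sdiff_inter B A), Finset.sdiff_union_inter]
    have e3 : ∑ j ∈ A ∩ B, v j = ∑ j ∈ B ∩ A, v j := by rw [Finset.inter_comm]
    linarith
  have hvi : v i ≤ ∑ j ∈ B, v j :=
    Finset.single_le_sum (fun j _ => hv j) hiB
  have hsum : ∑ j ∈ A ∪ {i}, v j = ∑ j ∈ A, v j + v i := by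
    rw [Finset.union_comm, ← Finset.insert_eq, Finset.sum_insert hiA]
    ring
  linarith
end

section
/- Let M be a matroid on a finite ground set E and let c : E → ℝ be a cost function. Let B be a base of M of minimum total cost, i.e., for every base B'' of M, Σ_{e∈B} c e ≤ Σ_{e∈B''} c e. Then for every base B' of M there exists a bijection φ : B → B' such that c e ≤ c (φ e) for every e ∈ B. -/
/-!
Induct on `|B' \ B|`. For `e ∈ B' \ B`, symmetric exchange gives `f ∈ B \ B'` such that both
`B - f + e` and `B' - e + f` are bases. Minimality of `B` compared with `B - f + e` gives
`c f ≤ c e`, and `B' - e + f` is a base closer to `B`; the bijection it receives by induction,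
followed by the transposition of `f` and `e`, is the required bijection onto `B'`.
-/

open Set

theorem finsum_mem_insert_sdiff_singleton_add {α M : Type*} [AddCommMonoid M] (c : α → M)
    {s : Set α} {a b : α} (hs : s.Finite) (ha : a ∈ s) (hb : b ∉ s) :
    (∑ᶠ x ∈ insert b s \ {a}, c x) + c a = (∑ᶠ x ∈ s, c x) + c b := by
  have hab : b ≠ a := fun h => hb (h ▸ ha)
  have hs' : ∑ᶠ x ∈ s, c x = c a + ∑ᶠ x ∈ s \ {a}, c x := by
    conv_lhs => rw [← insert_sdiff_self_of_mem ha]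
    exact finsum_mem_insert c (fun h => h.2 rfl) hs.sdiff
  rw [← insert_sdiff_singleton_comm hab, finsum_mem_insert c (fun h => hb h.1) hs.sdiff, hs']
  abel

theorem exists_equiv_insert_sdiff_le {α β : Type*} [Preorder β] (c : α → β) {s : Set α} {e f : α}
    (he : e ∈ s) (hf : f ∉ s) (hfe : c f ≤ c e) :
    ∃ φ : (insert f (s \ {e}) : Set α) ≃ s,
      ∀ x : (insert f (s \ {e}) : Set α), c x ≤ c (φ x) := by
  classical
  have hef : e ≠ f := fun h => hf (h ▸ he)
  refine ⟨(Equiv.swap f e).subtypeEquiv fun x => ?_, fun ⟨x, hx⟩ => ?_⟩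
  · by_cases hxf : x = f
    · simp [hxf, he]
    by_cases hxe : x = e
    · simp [hxe, hef, hf]
    simp [Equiv.swap_apply_of_ne_of_ne hxf hxe, hxf, hxe]
  · by_cases hxf : x = f
    · simpa [hxf] using hfe
    have hxe : x ≠ e := by rintro rfl; simp [hxf] at hx
    simp [Equiv.swap_apply_of_ne_of_ne hxf hxe]

namespace Matroid

variable {α : Type*} {M : Matroid α} {B B' : Set α}

theorem IsBase.exists_symm_exchange (hB : M.IsBase B) (hB' : M.IsBase B') {e : α}
    (he : e ∈ B' \ B) :
    ∃ f ∈ B \ B', M.IsBase (insert e B \ {f}) ∧ M.IsBase (insert f (B' \ {e})) := by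
  have heE : e ∈ M.E := hB'.subset_ground he.1
  have hC := hB.fundCircuit_isCircuit heE he.2
  -- `e` is spanned by the rest of its fundamental circuit but not by `B' - e`
  obtain ⟨f, hfC, hfe, hf⟩ :
      ∃ f ∈ M.fundCircuit e B, f ≠ e ∧ f ∉ M.closure (B' \ {e}) := by
    by_contra! h
    refine hB'.indep.notMem_closure_sdiff_of_mem he.1
      (M.closure_subset_closure_of_subset_closure ?_
        (hC.mem_closure_sdiff_singleton_of_mem (M.mem_fundCircuit e B)))
    exact fun x hx => h x hx.1 hx.2
  have hfB : f ∈ B := by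
    simpa [hfe] using M.fundCircuit_subset_insert e B hfC
  have hfB' : f ∉ B' := fun h => hf (M.mem_closure_of_mem' ⟨h, hfe⟩ (hB.subset_ground hfB))
  have hindep : M.Indep (insert e B \ {f}) :=
    (hB.indep.mem_fundCircuit_iff (hB.closure_eq ▸ heE) he.2).1 hfC
  exact ⟨f, ⟨hfB, hfB'⟩, hB.exchange_isBase_of_indep' hfB he.2 hindep,
    hB'.exchange_base_of_notMem_closure he.1 hf (hB.subset_ground hfB)⟩

theorem IsBase.exists_equiv_le_of_exchange_le [M.RankFinite] {β : Type*} [Preorder β]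
    {c : α → β} (hB : M.IsBase B)
    (hc : ∀ ⦃e f⦄, e ∉ B → f ∈ B → M.IsBase (insert e B \ {f}) → c f ≤ c e)
    (hB' : M.IsBase B') : ∃ φ : B ≃ B', ∀ x : B, c x ≤ c (φ x) := by
  induction hn : (B' \ B).ncard using Nat.strong_induction_on generalizing B' with
  | _ n ih =>
  obtain hsub | ⟨e, he⟩ := (B' \ B).eq_empty_or_nonempty
  · obtain rfl := hB'.eq_of_subset_isBase hB (sdiff_eq_empty.1 hsub)
    exact ⟨Equiv.refl _, fun _ => le_rfl⟩
  obtain ⟨f, hf, hBef, hB''⟩ := hB.exists_symm_exchange hB' he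
  have hcloser : (insert f (B' \ {e}) \ B).ncard < n := by
    refine hn ▸ ncard_lt_ncard ?_ (hB'.finite.sdiff)
    refine ssubset_of_subset_not_subset ?_ fun h => ?_
    · rintro x ⟨rfl | hx, hxB⟩
      exacts [absurd hf.1 hxB, ⟨hx.1, hxB⟩]
    · obtain ⟨rfl | ⟨-, hee⟩, -⟩ := h he
      exacts [he.2 hf.1, hee rfl]
  obtain ⟨ψ, hψ⟩ := ih _ hcloser hB'' rfl
  obtain ⟨χ, hχ⟩ := exists_equiv_insert_sdiff_le c he.1 hf.2 (hc he.2 hf.1 hBef)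
  exact ⟨ψ.trans χ, fun x => (hψ x).trans (hχ (ψ x))⟩

end Matroid

/-- Exchange property used in the Steiner Tree analysis: for a minimum-cost
base `B` of a matroid with finite ground set and any base `B'`, there is a
bijection `φ : B → B'` with `c e ≤ c (φ e)` for every `e ∈ B`. -/
theorem min_base_exchange_bijection {α : Type*} (M : Matroid α) [M.Finite]
    (c : α → ℝ) (B : Set α) (hB : M.IsBase B)
    (hmin : ∀ B'' : Set α, M.IsBase B'' → ∑ᶠ e ∈ B, c e ≤ ∑ᶠ e ∈ B'', c e)
    (B' : Set α) (hB' : M.IsBase B') :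
    ∃ φ : B ≃ B', ∀ e : B, c (e : α) ≤ c (φ e : α) := by
  refine hB.exists_equiv_le_of_exchange_le (fun e f he hf hBef => ?_) hB'
  have hsum := finsum_mem_insert_sdiff_singleton_add c hB.finite hf he
  linarith [hmin _ hBef]
end

section
/- Let ε be a real number with 0 < ε ≤ 1 and let α be a real number with α ≥ 1/ε. Then for all nonnegative reals C, m, p, S, we have (1 + ε)·C + (1 − ε)·m + min(p, (1/ε − 1)·S) ≤ (1 + ε)·((1 + 1/α)·C + (1 − 1/α)·m + min(p, (α − 1)·S)). -/
/-- Truncation step in Theorem 4.4 (approximating the best confidence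
parameter α): for any `α ≥ 1/ε`, the value of the bound from Theorem 4.2 at
the truncation point `1/ε` is within a factor `1 + ε` of its value at `α`. -/
theorem steiner_alpha_truncation (ε α : ℝ) (hε : 0 < ε) (hε1 : ε ≤ 1)
    (hα : 1 / ε ≤ α) (C m p S : ℝ)
    (hC : 0 ≤ C) (hm : 0 ≤ m) (hp : 0 ≤ p) (hS : 0 ≤ S) :
    (1 + ε) * C + (1 - ε) * m + min p ((1 / ε - 1) * S) ≤
      (1 + ε) * ((1 + 1 / α) * C + (1 - 1 / α) * m + min p ((α - 1) * S)) := by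
  have h1 : (1:ℝ) ≤ 1 / ε := one_le_one_div hε hε1
  have hα1 : (1:ℝ) ≤ α := h1.trans hα
  have hαpos : (0:ℝ) < α := lt_of_lt_of_le one_pos hα1
  have hinv : 1 / α ≤ ε := by
    have := one_div_le_one_div_of_le (lt_of_lt_of_le one_pos h1) hα
    simpa using this
  have hinvpos : 0 < 1 / α := by positivity
  have t1 : (1 + ε) * C ≤ (1 + ε) * ((1 + 1 / α) * C) := by
    nlinarith [mul_nonneg hC hinvpos.le]
  have t2 : (1 - ε) * m ≤ (1 + ε) * ((1 - 1 / α) * m) := by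
    nlinarith [mul_le_mul_of_nonneg_right hinv hm, mul_nonneg hm hε.le,
      mul_nonneg (mul_nonneg hm hε.le) hε.le,
      mul_le_mul_of_nonneg_right (mul_le_mul_of_nonneg_right hinv hm) hε.le]
  have t3 : min p ((1 / ε - 1) * S) ≤ (1 + ε) * min p ((α - 1) * S) := by
    have hmin1 : min p ((1 / ε - 1) * S) ≤ min p ((α - 1) * S) :=
      min_le_min le_rfl (mul_le_mul_of_nonneg_right (by linarith) hS)
    have hminnn : 0 ≤ min p ((α - 1) * S) :=
      le_min hp (mul_nonneg (by linarith) hS)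
    calc min p ((1 / ε - 1) * S) ≤ min p ((α - 1) * S) := hmin1
      _ ≤ (1 + ε) * min p ((α - 1) * S) :=
        le_mul_of_one_le_left hminnn (by linarith)
  calc (1 + ε) * C + (1 - ε) * m + min p ((1 / ε - 1) * S)
      ≤ (1 + ε) * ((1 + 1 / α) * C) + (1 + ε) * ((1 - 1 / α) * m)
          + (1 + ε) * min p ((α - 1) * S) := by linarith
    _ = (1 + ε) * ((1 + 1 / α) * C + (1 - 1 / α) * m + min p ((α - 1) * S)) := by
        ring
end
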